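/- Garner's algorithm is correct: given pairwise coprime moduli m_1, ..., m_t and residues v_1, ..., v_t with 0 ≤ v_i < m_i, the integer x it outputs satisfies 0 ≤ x < m_1⋯m_t and x ≡ v_i (mod m_i) for all i. -/

import Mathlib

/-!
After step `k` the value `x_k` is a mixed-radix number whose digits lie in `[0, m i)`, so it
stays below `∏_{j ≤ k} m j`. Step `k + 1` adds a multiple of `∏_{j ≤ k} m j`, which keeps every
earlier residue, and the new digit `u = (v − x) · C mod m` makes `x + u · ∏_{j ≤ k} m j ≡ v`
modulo `m (k + 1)` because `C` inverts that product.
-/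

/-- The iterative mixed-radix construction of Garner's algorithm:
`x₀ = v 0`, and `x_{i+1} = x_i + (((v (i+1) − x_i) · C (i+1)) mod m (i+1)) · ∏_{j ≤ i} m j`. -/
def garnerX (m : ℕ → ℕ) (C : ℕ → ℤ) (v : ℕ → ℤ) : ℕ → ℤ
  | 0 => v 0
  | i + 1 => garnerX m C v i +
      (((v (i + 1) - garnerX m C v i) * C (i + 1)) % (m (i + 1) : ℤ)) *
        ∏ j ∈ Finset.range (i + 1), (m j : ℤ)

open Finset

theorem Int.add_mul_lt_mul_of_lt_of_lt {x u M n : ℤ} (hx : x < M) (hu : u < n) (hM : 0 ≤ M) :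
    x + u * M < M * n := by
  nlinarith

theorem Int.add_emod_mul_modEq_of_mul_modEq_one {n x v c M : ℤ} (h : M * c ≡ 1 [ZMOD n]) :
    x + (v - x) * c % n * M ≡ v [ZMOD n] :=
  calc x + (v - x) * c % n * M ≡ x + (v - x) * c * M [ZMOD n] :=
        ((Int.mod_modEq _ n).mul_right M).add_left x
    _ = x + (v - x) * (M * c) := by ring
    _ ≡ x + (v - x) * 1 [ZMOD n] := (h.mul_left _).add_left x
    _ = v := by ring

section garnerX

variable {m : ℕ → ℕ} {C v : ℕ → ℤ}

theorem garnerX_nonneg_and_lt_prod {k : ℕ} (hm : ∀ i ≤ k, 0 < m i) (hv₀ : 0 ≤ v 0)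
    (hv₀m : v 0 < m 0) :
    0 ≤ garnerX m C v k ∧ garnerX m C v k < ∏ i ∈ range (k + 1), (m i : ℤ) := by
  induction k with
  | zero => exact ⟨hv₀, by simpa [garnerX] using hv₀m⟩
  | succ k ih =>
    obtain ⟨hx₀, hxM⟩ := ih fun i hi => hm i (by omega)
    have hn : (0 : ℤ) < m (k + 1) := by exact_mod_cast hm (k + 1) le_rfl
    have hM : (0 : ℤ) ≤ ∏ j ∈ range (k + 1), (m j : ℤ) := by positivity
    rw [garnerX, prod_range_succ _ (k + 1)]
    exact ⟨add_nonneg hx₀ (mul_nonneg (Int.emod_nonneg _ hn.ne') hM),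
      Int.add_mul_lt_mul_of_lt_of_lt hxM (Int.emod_lt_of_pos _ hn) hM⟩

theorem garnerX_modEq {k : ℕ}
    (hC : ∀ i, 0 < i → i ≤ k → (∏ j ∈ range i, (m j : ℤ)) * C i ≡ 1 [ZMOD m i]) :
    ∀ i ≤ k, garnerX m C v k ≡ v i [ZMOD m i] := by
  induction k with
  | zero =>
    intro i hi
    obtain rfl : i = 0 := by omega
    rfl
  | succ k ih =>
    intro i hi
    rw [garnerX]
    rcases hi.lt_or_eq with hi | rfl
    · have hdvd : (m i : ℤ) ∣ ∏ j ∈ range (k + 1), (m j : ℤ) :=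
        dvd_prod_of_mem _ (mem_range.2 hi)
      have hstep := (Int.modEq_zero_iff_dvd.2 (dvd_mul_of_dvd_right hdvd
        ((v (k + 1) - garnerX m C v k) * C (k + 1) % m (k + 1)))).add_left (garnerX m C v k)
      rw [add_zero] at hstep
      exact hstep.trans (ih (fun j hj hjk => hC j hj (by omega)) i (by omega))
    · exact Int.add_emod_mul_modEq_of_mul_modEq_one (hC _ (by omega) le_rfl)

end garnerX

theorem garner_correct_general (t : ℕ) (ht : 0 < t) (m : ℕ → ℕ) (C : ℕ → ℤ) (v : ℕ → ℤ)
    (hm : ∀ i, i < t → 0 < m i)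
    (hC : ∀ i, 0 < i → i < t →
      ((∏ j ∈ Finset.range i, (m j : ℤ)) * C i) % (m i : ℤ) = 1 % (m i : ℤ))
    (hv : ∀ i, i < t → 0 ≤ v i ∧ v i < (m i : ℤ)) :
    0 ≤ garnerX m C v (t - 1) ∧
    garnerX m C v (t - 1) < ∏ i ∈ Finset.range t, (m i : ℤ) ∧
    ∀ i, i < t → garnerX m C v (t - 1) % (m i : ℤ) = v i % (m i : ℤ) := by
  obtain ⟨k, rfl⟩ : ∃ k, t = k + 1 := ⟨t - 1, by omega⟩
  rw [Nat.add_sub_cancel]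
  obtain ⟨hx₀, hxM⟩ := garnerX_nonneg_and_lt_prod (k := k) (C := C)
    (fun i hi => hm i (by omega)) (hv 0 ht).1 (hv 0 ht).2
  exact ⟨hx₀, hxM, fun i hi =>
    garnerX_modEq (k := k) (fun j hj hjk => hC j hj (by omega)) i (by omega)⟩

/-- Correctness of Garner's algorithm: given pairwise coprime moduli `m 0, …, m (t−1)`,
coefficients `C i` inverse to `∏_{j < i} m j` modulo `m i`, and residues `0 ≤ v i < m i`,
the output `x = garnerX m C v (t − 1)` satisfies `0 ≤ x < ∏_{i < t} m i` and
`x ≡ v i (mod m i)` for all `i < t`. -/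
theorem garner_correct (t : ℕ) (ht : 0 < t) (m : ℕ → ℕ) (C : ℕ → ℤ) (v : ℕ → ℤ)
    (hm : ∀ i, i < t → 0 < m i)
    (hcop : ∀ i j, i < t → j < t → i ≠ j → Nat.Coprime (m i) (m j))
    (hC : ∀ i, 0 < i → i < t →
      ((∏ j ∈ Finset.range i, (m j : ℤ)) * C i) % (m i : ℤ) = 1 % (m i : ℤ))
    (hv : ∀ i, i < t → 0 ≤ v i ∧ v i < (m i : ℤ)) :
    0 ≤ garnerX m C v (t - 1) ∧
    garnerX m C v (t - 1) < ∏ i ∈ Finset.range t, (m i : ℤ) ∧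
    ∀ i, i < t → garnerX m C v (t - 1) % (m i : ℤ) = v i % (m i : ℤ) :=
  garner_correct_general t ht m C v hm hC hv
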